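/- arXiv:2402.08281 — 6 statements merged into one kernel-verified Lean document; each statement's English description precedes it below -/
import Mathlib

section
/- Let D be a triangulated category. Suppose given triangulated categories D_0, D_1, ..., D_r with D_0 = 0 (the zero category) and D_r = D; triangulated functors F_i : D_i → D_{i+1} for 0 ≤ i ≤ r−1; and, for each 1 ≤ i ≤ r, a set A_i and a family (X^i_a : a ∈ A_i) of objects of D_i whose images under the quotient functor generate, as a triangulated category, the Verdier quotient D_i/⟨F_{i−1}⟩, where ⟨F_{i−1}⟩ denotes the thick triangulated subcategory of D_i generated by the essential image of F_{i−1}. Then the family of objects F_{r−1} ∘ ⋯ ∘ F_i(X^i_a), for 1 ≤ i ≤ r and a ∈ A_i (for i = r this composition is interpreted as the identity, giving the objects X^r_a themselves), generates D as a triangulated category. -/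
/-!
STATEMENT 0: generation of a triangulated category from a filtration by triangulated
functors and generators of the successive Verdier quotients.

A thick triangulated subcategory is encoded as a `CategoryTheory.Triangulated.Subcategory`
which is moreover stable under retracts (= direct summands); note that stability under
retracts implies closure under isomorphisms, i.e. strict fullness.  A family of objects
generates a triangulated category if every thick triangulated subcategory containing the
family contains every object.  The Verdier quotient `D_i/⟨F_{i-1}⟩` of `D_i` by the thick
triangulated subcategory generated by the essential image of `F_{i-1}` is encoded as an
arbitrary localization functor `L` with respect to the class of morphisms whose cone lies
in that subcategory, together with the Verdier pretriangulated structure (distinguished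
triangles = triangles isomorphic to images of distinguished triangles).  The compositions
`F_{r-1} ∘ ⋯ ∘ F_i` are encoded by functors `G i : D_i ⥤ D_r` with `G r ≅ 𝟭` and
`G i ≅ F i ⋙ G (i+1)` for `i < r`.
-/

open CategoryTheory Limits Pretriangulated Triangulated ZeroObject

section Defs

variable {C : Type u} [Category.{v} C] [HasZeroObject C] [Preadditive C] [HasShift C ℤ]
  [∀ n : ℤ, (shiftFunctor C n).Additive] [Pretriangulated C]

namespace CategoryTheory.Triangulated

/-- The structure `Triangulated.Subcategory` of the older Mathlib (removed since),
restored with its old meaning. -/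
structure Subcategory (C : Type u) [Category.{v} C] [HasZeroObject C] [Preadditive C]
    [HasShift C ℤ] [∀ n : ℤ, (shiftFunctor C n).Additive] [Pretriangulated C] where
  P : C → Prop
  zero' : ∃ (Z : C) (_ : IsZero Z), P Z
  shift (X : C) (n : ℤ) : P X → P (X⟦n⟧)
  ext₂' (T : Triangle C) (_ : T ∈ distTriang C) : P T.obj₁ → P T.obj₃ →
    ∃ (Y : C) (_ : P Y), Nonempty (T.obj₂ ≅ Y)

namespace Subcategory

/-- The old constructor `Triangulated.Subcategory.mk'`. -/
def mk' (P : C → Prop) (zero : P 0)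
    (shift : ∀ (X : C) (n : ℤ), P X → P (X⟦n⟧))
    (ext₂ : ∀ (T : Triangle C) (_ : T ∈ distTriang C), P T.obj₁ → P T.obj₃ → P T.obj₂) :
    Subcategory C where
  P := P
  zero' := ⟨0, isZero_zero _, zero⟩
  shift := shift
  ext₂' T hT h₁ h₃ := ⟨T.obj₂, ext₂ T hT h₁ h₃, ⟨Iso.refl _⟩⟩

/-- The old class of morphisms `Triangulated.Subcategory.W`. -/
def W (S : Subcategory C) : MorphismProperty C := fun X Y f => ∃ (Z : C) (g : Y ⟶ Z)
  (h : Z ⟶ X⟦(1 : ℤ)⟧) (_ : Triangle.mk f g h ∈ distTriang C), S.P Z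

end Subcategory

end CategoryTheory.Triangulated

/-- A triangulated subcategory is thick if it is stable under direct summands,
i.e. under retracts. -/
def IsThickSubcategory (T : Triangulated.Subcategory C) : Prop :=
  ∀ ⦃X Y : C⦄ (i : X ⟶ Y) (r : Y ⟶ X), i ≫ r = 𝟙 X → T.P Y → T.P X

/-- A family of objects (given as a set) generates a triangulated category if the
only thick triangulated subcategory containing it consists of all objects. -/
def GeneratesTriangulated (A : Set C) : Prop :=
  ∀ T : Triangulated.Subcategory C, IsThickSubcategory T → (∀ Y ∈ A, T.P Y) → ∀ X : C, T.P X

/-- The thick triangulated subcategory generated by a set of objects. -/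
def thickClosure (A : Set C) : Triangulated.Subcategory C :=
  Triangulated.Subcategory.mk'
    (fun X => ∀ T : Triangulated.Subcategory C, IsThickSubcategory T → (∀ Y ∈ A, T.P Y) → T.P X)
    (fun T hT _ => by
      obtain ⟨Z, hZ, hZP⟩ := T.zero'
      exact hT (0 : (0 : C) ⟶ Z) 0 ((isZero_zero C).eq_of_src _ _) hZP)
    (fun X n hX T hT hA => T.shift X n (hX T hT hA))
    (fun Tr hTr h₁ h₃ T hT hA => by
      obtain ⟨Y, hY, ⟨e⟩⟩ := T.ext₂' Tr hTr (h₁ T hT hA) (h₃ T hT hA)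
      exact hT e.hom e.inv e.hom_inv_id hY)

end Defs

/-!
Fix a thick subcategory `T` of `D_r` containing the objects `G_i (X^i_a)`; by induction on `i`
we show `G_i Z ∈ T` for all `Z`. For the step, the objects of `D_{i+1}` sent into `T` by (a
triangulated replacement of) `G_{i+1}` form a thick subcategory `T'`. By induction it contains
the essential image of `F_i`, hence the kernel `⟨F_i⟩` of the Verdier localization
`L : D_{i+1} ⥤ D_{i+1}/⟨F_i⟩`. Since morphisms of the quotient are fractions whose denominators
have cones in `⟨F_i⟩ ⊆ T'`, and an object killed by `L` is, up to shift, a direct summand of an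
object of `⟨F_i⟩`, any object whose image under `L` is a retract of the image of an object of
`T'` lies in `T'`. So the essential image of `T'` is a thick subcategory of the quotient; it
contains the generators `L (X^{i+1}_a)`, hence everything, and therefore `T'` is everything.
-/

section Thick

variable {C : Type*} [Category C] [HasZeroObject C] [Preadditive C] [HasShift C ℤ]
  [∀ n : ℤ, (shiftFunctor C n).Additive] [Pretriangulated C]

namespace CategoryTheory.Triangulated.Subcategory

instance (S : Subcategory C) : ObjectProperty.IsTriangulated S.P where
  exists_zero := by
    obtain ⟨Z, hZ, h⟩ := S.zero'
    exact ⟨Z, hZ, h⟩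
  isStableUnderShiftBy n := ⟨fun X hX => S.shift X n hX⟩
  ext₂' := S.ext₂'

instance [IsTriangulated C] (S : Subcategory C) : S.W.HasLeftCalculusOfFractions :=
  inferInstanceAs (ObjectProperty.trW S.P).HasLeftCalculusOfFractions

end CategoryTheory.Triangulated.Subcategory

namespace IsThickSubcategory

variable {T : Subcategory C}

lemma mem_of_iso (hT : IsThickSubcategory T) {X Y : C} (e : X ≅ Y) (h : T.P Y) : T.P X :=
  hT e.hom e.inv e.hom_inv_id h

lemma mem_obj₂ (hT : IsThickSubcategory T) (Tr : Triangle C) (hTr : Tr ∈ distTriang C)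
    (h₁ : T.P Tr.obj₁) (h₃ : T.P Tr.obj₃) : T.P Tr.obj₂ := by
  obtain ⟨Y, hY, ⟨e⟩⟩ := T.ext₂' Tr hTr h₁ h₃
  exact hT.mem_of_iso e hY

lemma mem_obj₁ (hT : IsThickSubcategory T) (Tr : Triangle C) (hTr : Tr ∈ distTriang C)
    (h₂ : T.P Tr.obj₂) (h₃ : T.P Tr.obj₃) : T.P Tr.obj₁ :=
  hT.mem_obj₂ _ (inv_rot_of_distTriang _ hTr) (T.shift _ (-1) h₃) h₂

lemma mem_of_isZero (hT : IsThickSubcategory T) {X : C} (hX : IsZero X) : T.P X := by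
  obtain ⟨Z, hZ, h⟩ := T.zero'
  exact hT.mem_of_iso (hX.iso hZ) h

lemma mem_of_mem_shift (hT : IsThickSubcategory T) {X : C} (n : ℤ) (h : T.P (X⟦n⟧)) : T.P X :=
  hT.mem_of_iso ((shiftEquiv C n).unitIso.app X) (T.shift _ (-n) h)

variable {B : Type*} [Category B] [HasZeroObject B] [Preadditive B] [HasShift B ℤ]
  [∀ n : ℤ, (shiftFunctor B n).Additive] [Pretriangulated B]

def comap (hT : IsThickSubcategory T) (E : B ⥤ C) [E.CommShift ℤ] [E.IsTriangulated] :
    Subcategory B :=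
  Subcategory.mk' (fun X => T.P (E.obj X)) (hT.mem_of_isZero (E.map_isZero (isZero_zero B)))
    (fun X n h => hT.mem_of_iso ((E.commShiftIso n).app X) (T.shift _ n h))
    (fun Tr hTr => hT.mem_obj₂ _ (E.map_distinguished Tr hTr))

lemma isThick_comap (hT : IsThickSubcategory T) (E : B ⥤ C) [E.CommShift ℤ] [E.IsTriangulated] :
    IsThickSubcategory (hT.comap E) := fun _ _ i r hir =>
  hT (E.map i) (E.map r) (by rw [← E.map_comp, hir, E.map_id])

end IsThickSubcategory

end Thick

section Localization

variable {C : Type*} [Category C] [HasZeroObject C] [Preadditive C] [HasShift C ℤ]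
  [∀ n : ℤ, (shiftFunctor C n).Additive] [Pretriangulated C] [IsTriangulated C]
  {Q : Type*} [Category Q] {S T : Subcategory C} (L : C ⥤ Q) [L.IsLocalization S.W]

namespace IsThickSubcategory

lemma exists_map_eq_comp_map (hT : IsThickSubcategory T) (hST : ∀ X, S.P X → T.P X) {X U : C}
    (u : L.obj X ⟶ L.obj U) (hU : T.P U) :
    ∃ (Y : C) (f : X ⟶ Y) (s : U ⟶ Y), S.W s ∧ T.P Y ∧ L.map f = u ≫ L.map s := by
  obtain ⟨φ, rfl⟩ := Localization.exists_leftFraction L S.W u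
  obtain ⟨K, g, h, hs, hK⟩ := φ.hs
  exact ⟨φ.Y', φ.f, φ.s, φ.hs, hT.mem_obj₂ _ hs hU (hST _ hK), (φ.map_comp_map_s _ _).symm⟩

variable [HasZeroObject Q] [Preadditive Q] [HasShift Q ℤ] [∀ n : ℤ, (shiftFunctor Q n).Additive]
  [Pretriangulated Q] [L.CommShift ℤ] [L.IsTriangulated]

lemma mem_of_isZero_map (hT : IsThickSubcategory T) (hST : ∀ X, S.P X → T.P X) {Z : C}
    (hZ : IsZero (L.obj Z)) : T.P Z := by
  have hid : L.map (𝟙 Z) = L.map 0 := by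
    rw [L.map_id, L.map_zero]
    exact hZ.eq_of_src _ _
  obtain ⟨P, σ, ⟨K, p, q, hσ, hK⟩, hσ0⟩ := (MorphismProperty.map_eq_iff_postcomp L S.W _ _).1 hid
  rw [Category.id_comp, zero_comp] at hσ0
  -- `σ = 0` splits its triangle, so `Z⟦1⟧` is a direct summand of the cone `K ∈ S`
  have hσ1 : 𝟙 (Z⟦(1 : ℤ)⟧) ≫ (Triangle.mk σ p q).rotate.mor₃ = 0 := by
    change 𝟙 _ ≫ (-(shiftFunctor C (1 : ℤ)).map σ) = 0
    rw [hσ0, Functor.map_zero, neg_zero, comp_zero]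
  obtain ⟨r, hr⟩ := Triangle.coyoneda_exact₃ _ (rot_of_distTriang _ hσ) _ hσ1
  exact hT.mem_of_mem_shift 1 (hT r q hr.symm (hST _ hK))

lemma mem_of_isIso_map (hT : IsThickSubcategory T) (hST : ∀ X, S.P X → T.P X) {X Y : C}
    (f : X ⟶ Y) [IsIso (L.map f)] (hY : T.P Y) : T.P X := by
  obtain ⟨K, g, h, hf⟩ := distinguished_cocone_triangle f
  have hK : IsZero (L.obj K) :=
    Triangle.isZero₃_of_isIso₁ _ (L.map_distinguished _ hf) (inferInstanceAs (IsIso (L.map f)))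
  exact hT.mem_obj₁ _ hf hY (hT.mem_of_isZero_map L hST hK)

lemma mem_of_map_iso (hT : IsThickSubcategory T) (hST : ∀ X, S.P X → T.P X) {X U : C}
    (e : L.obj X ≅ L.obj U) (hU : T.P U) : T.P X := by
  obtain ⟨Y, f, s, hs, hY, hf⟩ := hT.exists_map_eq_comp_map L hST e.hom hU
  have := Localization.inverts L S.W s hs
  have : IsIso (L.map f) := by rw [hf]; infer_instance
  exact hT.mem_of_isIso_map L hST f hY

lemma mem_of_isSplitMono_map (hT : IsThickSubcategory T) (hST : ∀ X, S.P X → T.P X) {X Y : C}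
    (f : X ⟶ Y) [IsSplitMono (L.map f)] (hY : T.P Y) : T.P X := by
  obtain ⟨K, g, h, hf⟩ := distinguished_cocone_triangle f
  have hLf := L.map_distinguished _ hf
  obtain ⟨e, -, -⟩ := exists_iso_binaryBiproduct_of_distTriang _ hLf
    (Triangle.mor₃_eq_zero_of_mono₁ _ hLf (inferInstanceAs (Mono (L.map f))))
  have := preservesBinaryBiproducts_of_preservesBiproducts L
  have hXK : T.P (X ⊞ K) := hT.mem_of_map_iso L hST (L.mapBiprod X K ≪≫ e.symm) hY
  exact hT biprod.inl biprod.fst biprod.inl_fst hXK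

lemma mem_of_map_retract (hT : IsThickSubcategory T) (hST : ∀ X, S.P X → T.P X) {X U : C}
    (u : L.obj X ⟶ L.obj U) (v : L.obj U ⟶ L.obj X) (huv : u ≫ v = 𝟙 _) (hU : T.P U) :
    T.P X := by
  obtain ⟨Y, f, s, hs, hY, hf⟩ := hT.exists_map_eq_comp_map L hST u hU
  have := Localization.inverts L S.W s hs
  have : IsSplitMono (L.map f) := IsSplitMono.mk' ⟨inv (L.map s) ≫ v, by simp [hf, huv]⟩
  exact hT.mem_of_isSplitMono_map L hST f hY

def map (hT : IsThickSubcategory T) (hST : ∀ X, S.P X → T.P X)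
    (hVerdier : ∀ Tr ∈ distTriang Q, Tr ∈ L.essImageDistTriang) : Subcategory Q :=
  Subcategory.mk' (fun W => ∃ X, Nonempty (W ≅ L.obj X) ∧ T.P X)
    ⟨0, ⟨(isZero_zero Q).iso (L.map_isZero (isZero_zero C))⟩, hT.mem_of_isZero (isZero_zero C)⟩
    (fun _ n ⟨X, ⟨e⟩, hX⟩ =>
      ⟨X⟦n⟧, ⟨(shiftFunctor Q n).mapIso e ≪≫ ((L.commShiftIso n).app X).symm⟩, T.shift X n hX⟩)
    (fun Tr hTr ⟨_, ⟨e₁⟩, h₁⟩ ⟨_, ⟨e₃⟩, h₃⟩ => by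
      obtain ⟨Tr₀, e, hTr₀⟩ := hVerdier Tr hTr
      exact ⟨Tr₀.obj₂, ⟨Triangle.π₂.mapIso e⟩, hT.mem_obj₂ Tr₀ hTr₀
        (hT.mem_of_map_iso L hST ((Triangle.π₁.mapIso e).symm ≪≫ e₁) h₁)
        (hT.mem_of_map_iso L hST ((Triangle.π₃.mapIso e).symm ≪≫ e₃) h₃)⟩)

lemma isThick_map (hT : IsThickSubcategory T) (hST : ∀ X, S.P X → T.P X)
    (hVerdier : ∀ Tr ∈ distTriang Q, Tr ∈ L.essImageDistTriang) :
    IsThickSubcategory (hT.map L hST hVerdier) := by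
  rintro W₁ W₂ i r hir ⟨X₂, ⟨e₂⟩, h₂⟩
  have := Localization.essSurj L S.W
  refine ⟨L.objPreimage W₁, ⟨(L.objObjPreimageIso W₁).symm⟩, hT.mem_of_map_retract L hST
    ((L.objObjPreimageIso W₁).hom ≫ i ≫ e₂.hom) (e₂.inv ≫ r ≫ (L.objObjPreimageIso W₁).inv)
    ?_ h₂⟩
  simp [reassoc_of% hir]

theorem forall_mem_of_generates_map (hT : IsThickSubcategory T) (hST : ∀ X, S.P X → T.P X)
    (hVerdier : ∀ Tr ∈ distTriang Q, Tr ∈ L.essImageDistTriang) {ι : Type*} (X : ι → C)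
    (hGen : GeneratesTriangulated (Set.range fun a => L.obj (X a))) (hX : ∀ a, T.P (X a))
    (Z : C) : T.P Z := by
  obtain ⟨Z', ⟨e⟩, hZ'⟩ := hGen _ (hT.isThick_map L hST hVerdier)
    (by rintro _ ⟨a, rfl⟩; exact ⟨X a, ⟨Iso.refl _⟩, hX a⟩) (L.obj Z)
  exact hT.mem_of_map_iso L hST e hZ'

end IsThickSubcategory

end Localization

lemma exists_isTriangulated_iso_of_iso_comp {𝒟 : ℕ → Type*} [∀ i, Category (𝒟 i)]
    [∀ i, HasZeroObject (𝒟 i)] [∀ i, Preadditive (𝒟 i)] [∀ i, HasShift (𝒟 i) ℤ]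
    [∀ i (n : ℤ), (shiftFunctor (𝒟 i) n).Additive] [∀ i, Pretriangulated (𝒟 i)]
    (F : ∀ i, 𝒟 i ⥤ 𝒟 (i + 1)) [∀ i, (F i).CommShift ℤ] [∀ i, (F i).IsTriangulated]
    {r : ℕ} (G : ∀ i, 𝒟 i ⥤ 𝒟 r) (eGr : G r ≅ 𝟭 (𝒟 r))
    (eG : ∀ i, i < r → (G i ≅ F i ⋙ G (i + 1))) {i : ℕ} (hi : i ≤ r) :
    ∃ (E : 𝒟 i ⥤ 𝒟 r) (_ : E.CommShift ℤ), E.IsTriangulated ∧ Nonempty (G i ≅ E) := by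
  induction hi using Nat.decreasingInduction with
  | self => exact ⟨𝟭 _, inferInstance, inferInstance, ⟨eGr⟩⟩
  | of_succ i hi ih =>
    obtain ⟨E, _, _, ⟨e⟩⟩ := ih
    exact ⟨F i ⋙ E, inferInstance, inferInstance, ⟨eG i hi ≪≫ Functor.isoWhiskerLeft (F i) e⟩⟩

theorem generatesTriangulated_of_filtration
    -- the triangulated categories `D_0, D_1, ..., D_r`, with `D = D_r`
    (r : ℕ) (𝒟 : ℕ → Type u) [∀ i, Category.{v} (𝒟 i)] [∀ i, HasZeroObject (𝒟 i)]
    [∀ i, Preadditive (𝒟 i)] [∀ i, HasShift (𝒟 i) ℤ]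
    [∀ i (n : ℤ), (shiftFunctor (𝒟 i) n).Additive] [∀ i, Pretriangulated (𝒟 i)]
    [∀ i, IsTriangulated (𝒟 i)]
    -- `D_0` is the zero category
    (h0 : ∀ X : 𝒟 0, IsZero X)
    -- the triangulated functors `F_i : D_i ⥤ D_{i+1}`
    (F : ∀ i, 𝒟 i ⥤ 𝒟 (i + 1)) [∀ i, (F i).CommShift ℤ] [∀ i, (F i).IsTriangulated]
    -- the compositions `G i = F_{r-1} ∘ ⋯ ∘ F_i : D_i ⥤ D_r`
    (G : ∀ i, 𝒟 i ⥤ 𝒟 r) (eGr : G r ≅ 𝟭 (𝒟 r))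
    (eG : ∀ i, i < r → (G i ≅ F i ⋙ G (i + 1)))
    -- the families of objects `X^i_a`, `a ∈ A_i`
    (A : ℕ → Type w) (X : ∀ i, A i → 𝒟 i)
    -- the Verdier quotients `D_{i+1}/⟨F_i⟩` for `i < r`
    (𝒬 : ℕ → Type u') [∀ i, Category.{v'} (𝒬 i)] [∀ i, HasZeroObject (𝒬 i)]
    [∀ i, Preadditive (𝒬 i)] [∀ i, HasShift (𝒬 i) ℤ]
    [∀ i (n : ℤ), (shiftFunctor (𝒬 i) n).Additive] [∀ i, Pretriangulated (𝒬 i)]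
    (L : ∀ i, 𝒟 (i + 1) ⥤ 𝒬 i) [∀ i, (L i).CommShift ℤ] [∀ i, (L i).IsTriangulated]
    (hLoc : ∀ i, i < r → (L i).IsLocalization (thickClosure ((F i).essImage)).W)
    (hVerdier : ∀ i, i < r → ∀ T : Triangle (𝒬 i),
      (T ∈ distTriang (𝒬 i)) ↔ T ∈ (L i).essImageDistTriang)
    -- the images of the `X^{i+1}_a` generate the Verdier quotient `D_{i+1}/⟨F_i⟩`
    (hGen : ∀ i, i < r →
      GeneratesTriangulated (Set.range fun a : A (i + 1) => (L i).obj (X (i + 1) a))) :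
    -- conclusion: the objects `G i (X^i_a)`, `1 ≤ i ≤ r`, `a ∈ A_i`, generate `D_r`
    GeneratesTriangulated
      {Z : 𝒟 r | ∃ (i : ℕ) (a : A i), 1 ≤ i ∧ i ≤ r ∧ (G i).obj (X i a) = Z} := by
  intro T hT hA
  have hmem : ∀ i, i ≤ r → ∀ Z : 𝒟 i, T.P ((G i).obj Z) := by
    intro i
    induction i with
    | zero =>
      intro _ Z
      obtain ⟨E, _, _, ⟨e⟩⟩ := exists_isTriangulated_iso_of_iso_comp F G eGr eG (Nat.zero_le r)
      exact hT.mem_of_iso (e.app Z) (hT.mem_of_isZero (E.map_isZero (h0 Z)))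
    | succ i ih =>
      intro hi
      obtain ⟨E, _, _, ⟨e⟩⟩ := exists_isTriangulated_iso_of_iso_comp F G eGr eG hi
      have := hLoc i hi
      have hF : ∀ Y, (hT.comap E).P ((F i).obj Y) := fun Y =>
        hT.mem_of_iso ((e.app _).symm ≪≫ ((eG i hi).app Y).symm) (ih (Nat.le_of_succ_le hi) Y)
      have hST : ∀ Z, (thickClosure (F i).essImage).P Z → (hT.comap E).P Z :=
        fun Z hZ => hZ _ (hT.isThick_comap E) (by
          rintro _ ⟨Y, ⟨eY⟩⟩
          exact hT.mem_of_iso (E.mapIso eY.symm) (hF Y))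
      have hX : ∀ a, (hT.comap E).P (X (i + 1) a) := fun a =>
        hT.mem_of_iso (e.app _).symm (hA _ ⟨i + 1, a, by omega, hi, rfl⟩)
      intro Z
      exact hT.mem_of_iso (e.app Z) ((hT.isThick_comap E).forall_mem_of_generates_map (L i) hST
        (fun Tr hTr => (hVerdier i hi Tr).1 hTr) (X (i + 1)) (hGen i hi) hX Z)
  exact fun Z => hT.mem_of_iso (eGr.app Z).symm (hmem r le_rfl Z)
end

section
/- Let D be a triangulated category, let S be a triangulated subcategory of D, and let D′ be a triangulated subcategory of D containing S (so that S is also a triangulated subcategory of D′). Then the canonical triangulated functor D′/S → D/S between the Verdier quotients, induced by the inclusion D′ ⊆ D, is fully faithful. -/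
/-!
Up to the equivalence between `D′` and the essential image `A` of `ι`, under which the morphisms
of `D′` with cone in `S′` are those of `A` with cone in `S`, this is Verdier's criterion: the
quotient functor `A/(A ∩ S) ⥤ D/S` is fully faithful as soon as every morphism from an object
of `S` to an object of `A` factors through an object of `A ∩ S`. When `S ⊆ A`, the identity
provides the factorization.
-/

open CategoryTheory Limits Pretriangulated Triangulated

namespace CategoryTheory.ObjectProperty

lemma isVerdierRightLocalizing_of_le {C : Type*} [Category C] {A B : ObjectProperty C}
    (h : B ≤ A) : A.IsVerdierRightLocalizing B where
  fac f hX _ := ⟨_, 𝟙 _, f, h _ hX, hX, Category.id_comp f⟩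

variable {C D : Type*} [Category C] [HasZeroObject C] [Preadditive C] [HasShift C ℤ]
  [∀ n : ℤ, (shiftFunctor C n).Additive] [Pretriangulated C]
  [Category D] [HasZeroObject D] [Preadditive D] [HasShift D ℤ]
  [∀ n : ℤ, (shiftFunctor D n).Additive] [Pretriangulated D]
  (ι : C ⥤ D) [ι.CommShift ℤ] [ι.IsTriangulated]
  (S : ObjectProperty D) [S.IsClosedUnderIsomorphisms]

lemma trW_inverseImage : (S.inverseImage ι).trW = S.trW.inverseImage ι := by
  ext X Y f
  exact S.inverseImage_trW_iff ι f

noncomputable def trWLocalizerMorphism : LocalizerMorphism (S.inverseImage ι).trW S.trW :=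
  .ofEq (trW_inverseImage ι S)

section Full

variable [ι.Full]

lemma trW_inverseImage_eq_inverseImage_toEssImage :
    (S.inverseImage ι).trW = (S.inverseImage ι.essImage.ι).trW.inverseImage ι.toEssImage := by
  ext X Y f
  exact (S.inverseImage_trW_iff ι f).trans
    (S.inverseImage_trW_iff ι.essImage.ι (ι.toEssImage.map f)).symm

noncomputable def toEssImageTrWLocalizerMorphism :
    LocalizerMorphism (S.inverseImage ι).trW (S.inverseImage ι.essImage.ι).trW :=
  .ofEq (trW_inverseImage_eq_inverseImage_toEssImage ι S)

instance : (toEssImageTrWLocalizerMorphism ι S).IsInduced :=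
  ⟨(trW_inverseImage_eq_inverseImage_toEssImage ι S).symm⟩

instance [ι.Faithful] : (toEssImageTrWLocalizerMorphism ι S).functor.IsEquivalence :=
  inferInstanceAs ι.toEssImage.IsEquivalence

lemma isLocalizedFullyFaithful_trWLocalizerMorphism [IsTriangulated D] [S.IsTriangulated]
    [ι.Faithful] (h : S ≤ ι.essImage) :
    (trWLocalizerMorphism ι S).IsLocalizedFullyFaithful := by
  have := (toEssImageTrWLocalizerMorphism ι S).isLocalizedEquivalence_of_isInduced
  have := isVerdierRightLocalizing_of_le h
  let Φ := (toEssImageTrWLocalizerMorphism ι S).comp (ι.essImage.triangulatedLocalizerMorphism S)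
  let G := Φ.localizedFunctor (S.inverseImage ι).trW.Q S.trW.Q
  let : CatCommSq (trWLocalizerMorphism ι S).functor (S.inverseImage ι).trW.Q S.trW.Q G :=
    ⟨Functor.isoWhiskerRight (ι.toEssImageCompι).symm _ ≪≫ CatCommSq.iso Φ.functor _ _ G⟩
  exact .mk' _ (S.inverseImage ι).trW.Q S.trW.Q G (Φ.fullyFaithfulLocalizedFunctor _ _)

end Full

end CategoryTheory.ObjectProperty

theorem full_and_faithful_verdier_quotient_of_subcategory
    {D : Type u} [Category.{v} D] [HasZeroObject D] [Preadditive D] [HasShift D ℤ]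
    [∀ n : ℤ, (shiftFunctor D n).Additive] [Pretriangulated D] [IsTriangulated D]
    {D' : Type u₁} [Category.{v₁} D'] [HasZeroObject D'] [Preadditive D'] [HasShift D' ℤ]
    [∀ n : ℤ, (shiftFunctor D' n).Additive] [Pretriangulated D'] [IsTriangulated D']
    -- the inclusion of the triangulated subcategory `D′` of `D`
    (ι : D' ⥤ D) [ι.CommShift ℤ] [ι.IsTriangulated] [ι.Full] [ι.Faithful]
    -- the triangulated subcategory `S` of `D`, and the corresponding subcategory of `D′`
    (S : ObjectProperty D) [S.IsTriangulated] [S.IsClosedUnderIsomorphisms]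
    (S' : ObjectProperty D') [S'.IsTriangulated] [S'.IsClosedUnderIsomorphisms]
    (hS' : ∀ X : D', S' X ↔ S (ι.obj X))
    -- `S` is contained in `D′`
    (hSD' : ∀ X : D, S X → ∃ Y : D', Nonempty (ι.obj Y ≅ X))
    -- the Verdier quotients `D/S` and `D′/S`
    {E : Type u'} [Category.{v'} E] (Q : D ⥤ E) [Q.IsLocalization S.trW]
    {E' : Type u₁'} [Category.{v₁'} E'] (Q' : D' ⥤ E') [Q'.IsLocalization S'.trW]
    -- the canonical functor induced by the inclusion
    (F : E' ⥤ E) (e : Q' ⋙ F ≅ ι ⋙ Q) :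
    F.Full ∧ F.Faithful := by
  obtain rfl : S' = S.inverseImage ι := funext fun X ↦ propext (hS' X)
  let Φ := ObjectProperty.trWLocalizerMorphism ι S
  have := ObjectProperty.isLocalizedFullyFaithful_trWLocalizerMorphism ι S hSD'
  let : CatCommSq Φ.functor Q' Q F := ⟨e.symm⟩
  exact ⟨Φ.full Q' Q F, Φ.faithful Q' Q F⟩
end

section
/- Let R be a commutative noetherian ring, let I ⊆ R be an ideal, and let A be an R-algebra which is finitely generated as an R-module. Let M be a left A-module which is I-power torsion. Then there exist a left A-module Q which is I-power torsion and is an injective object of the category of left A-modules, together with an injective homomorphism of left A-modules M → Q. -/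
/-!
Embed `M` into an injective `A`-module `E`; the `I`-power torsion submodule `Γ_I(E)` contains `M`,
and it is injective by Baer's criterion. Given `g : J → Γ_I(E)` on a left ideal `J`, the image of
`g` is finitely generated (`A` is left noetherian), so it is killed by a single power `I ^ n`. By
Artin–Rees, `I ^ m A ∩ J ⊆ I ^ n J` for some `m`, so `g` vanishes on `I ^ m A ∩ J` and factors
through `J ⧸ (I ^ m A ∩ J) ⊆ A ⧸ I ^ m A`. Injectivity of `E` extends it to `A ⧸ I ^ m A`, and the
image of `1` is an element of `Γ_I(E)` (killed by `I ^ m`) through which `g` extends to `A`.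
-/

open CategoryTheory

/-- A left `A`-module `M` (for `A` an `R`-algebra) is `I`-power torsion if every element
is annihilated by some power of the ideal `I`. -/
def IsIPowerTorsion {R : Type u} [CommRing R] (I : Ideal R) (A : Type u) [Ring A]
    [Algebra R A] (M : Type u) [AddCommGroup M] [Module A M] : Prop :=
  ∀ m : M, ∃ n : ℕ, ∀ r ∈ I ^ n, algebraMap R A r • m = 0

section Torsion

variable {R : Type*} [CommRing R] (I K : Ideal R) (A : Type*) [Ring A] [Algebra R A]
  (E : Type*) [AddCommGroup E] [Module A E]

def torsionByIdeal : Submodule A E where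
  carrier := {e | ∀ r ∈ K, algebraMap R A r • e = 0}
  zero_mem' _ _ := smul_zero _
  add_mem' ha hb r hr := by rw [smul_add, ha r hr, hb r hr, add_zero]
  smul_mem' c e he r hr := by rw [smul_smul, Algebra.commutes r c, mul_smul, he r hr, smul_zero]

def powerTorsion : Submodule A E :=
  ⨆ n : ℕ, torsionByIdeal (I ^ n) A E

variable {I A E}

theorem monotone_torsionByIdeal_pow : Monotone fun n : ℕ => torsionByIdeal (I ^ n) A E :=
  fun _ _ hmn _ he r hr => he r (Ideal.pow_le_pow_right hmn hr)

theorem mem_powerTorsion {e : E} :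
    e ∈ powerTorsion I A E ↔ ∃ n : ℕ, e ∈ torsionByIdeal (I ^ n) A E :=
  Submodule.mem_iSup_of_directed _ monotone_torsionByIdeal_pow.directed_le

theorem Submodule.FG.exists_le_torsionByIdeal_pow {S : Submodule A E} (hS : S.FG)
    (hS_le : S ≤ powerTorsion I A E) : ∃ n : ℕ, S ≤ torsionByIdeal (I ^ n) A E := by
  obtain ⟨s, hs⟩ := CompleteLattice.IsCompactElement.exists_finset_of_le_iSup _
    ((Submodule.fg_iff_compact S).1 hS) _ hS_le
  exact ⟨s.sup id, hs.trans <| iSup₂_le fun n hn =>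
    monotone_torsionByIdeal_pow (Finset.le_sup (f := id) hn)⟩

end Torsion

section PowerTorsion

variable {R : Type u} [CommRing R] (I : Ideal R) (A : Type u) [Ring A] [Algebra R A]
  (E : Type u) [AddCommGroup E] [Module A E]

theorem isIPowerTorsion_powerTorsion : IsIPowerTorsion I A (powerTorsion I A E) := fun e => by
  obtain ⟨n, hn⟩ := mem_powerTorsion.1 e.2
  exact ⟨n, fun r hr => Subtype.ext (hn r hr)⟩

variable {I A E} in
theorem IsIPowerTorsion.range_le_powerTorsion {M : Type u} [AddCommGroup M] [Module A M]
    (hM : IsIPowerTorsion I A M) (f : M →ₗ[A] E) : LinearMap.range f ≤ powerTorsion I A E := by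
  rintro _ ⟨x, rfl⟩
  obtain ⟨n, hn⟩ := hM x
  exact mem_powerTorsion.2 ⟨n, fun r hr => by rw [← map_smul, hn r hr, map_zero]⟩

end PowerTorsion

def Ideal.leftExtension {R : Type*} [CommRing R] (K : Ideal R) (A : Type*) [Ring A]
    [Algebra R A] : Ideal A where
  __ := (K • ⊤ : Submodule R A)
  smul_mem' c x hx := by
    refine Submodule.smul_induction_on hx (fun r hr b _ => ?_) (fun x y hx hy => ?_)
    · rw [smul_comm c r b]
      exact Submodule.smul_mem_smul hr trivial
    · rw [smul_add]
      exact Submodule.add_mem _ hx hy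

theorem Ideal.algebraMap_mem_leftExtension {R : Type*} [CommRing R] {K : Ideal R} {A : Type*}
    [Ring A] [Algebra R A] {r : R} (hr : r ∈ K) : algebraMap R A r ∈ K.leftExtension A := by
  show algebraMap R A r ∈ (K • ⊤ : Submodule R A)
  rw [Algebra.algebraMap_eq_smul_one r]
  exact Submodule.smul_mem_smul hr trivial

theorem Ideal.exists_pow_smul_top_inf_le_pow_smul {R M : Type*} [CommRing R] [IsNoetherianRing R]
    [AddCommGroup M] [Module R M] [Module.Finite R M] (I : Ideal R) (N : Submodule R M) (n : ℕ) :
    ∃ m, I ^ m • ⊤ ⊓ N ≤ I ^ n • N := by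
  obtain ⟨k, hk⟩ := I.exists_pow_inf_eq_pow_smul N
  refine ⟨n + k, ?_⟩
  rw [hk _ (Nat.le_add_left k n), Nat.add_sub_cancel]
  exact smul_mono_right _ inf_le_right

theorem Module.Injective.exists_smul_eq_of_comap_le_ker {A E : Type u} [Ring A] [AddCommGroup E]
    [Module A E] [Module.Injective A E] {J 𝔞 : Ideal A} (f : J →ₗ[A] E)
    (hf : Submodule.comap J.subtype 𝔞 ≤ LinearMap.ker f) :
    ∃ e : E, 𝔞 ≤ LinearMap.ker (LinearMap.toSpanSingleton A E e) ∧ ∀ x : J, (x : A) • e = f x := by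
  set p := Submodule.comap J.subtype 𝔞
  -- extend `J ⧸ p → E` along the injection `J ⧸ p → A ⧸ 𝔞`; `e` is the image of `1`
  have hinj : Function.Injective (p.mapQ 𝔞 J.subtype le_rfl) := by
    rw [← LinearMap.ker_eq_bot, Submodule.ker_mapQ, Submodule.mkQ_map_self]
  obtain ⟨h, hh⟩ := Module.Injective.out _ hinj (p.liftQ f hf)
  have h_mk (a : A) : a • h (Submodule.Quotient.mk 1) = h (Submodule.Quotient.mk a) := by
    rw [← map_smul, ← Submodule.Quotient.mk_smul, smul_eq_mul, mul_one]
  refine ⟨h (Submodule.Quotient.mk 1), fun a ha => ?_, fun x => ?_⟩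
  · rw [LinearMap.mem_ker, LinearMap.toSpanSingleton_apply, h_mk,
      (Submodule.Quotient.mk_eq_zero 𝔞).2 ha, map_zero]
  · exact (h_mk x).trans (hh (Submodule.Quotient.mk x))

section Noetherian

variable {R : Type u} [CommRing R] [IsNoetherianRing R] (I : Ideal R)
  {A : Type u} [Ring A] [Algebra R A] [Module.Finite R A] {E : Type u} [AddCommGroup E] [Module A E]

theorem exists_comap_leftExtension_pow_le_ker {J : Ideal A} {f : J →ₗ[A] E} {n : ℕ}
    (hf : LinearMap.range f ≤ torsionByIdeal (I ^ n) A E) :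
    ∃ m : ℕ, Submodule.comap J.subtype ((I ^ m).leftExtension A) ≤ LinearMap.ker f := by
  have hsmul : I ^ n • J.restrictScalars R ≤ ((LinearMap.ker f).map J.subtype).restrictScalars R :=
    Submodule.smul_le.2 fun r hr x (hx : x ∈ J) => ⟨algebraMap R A r • ⟨x, hx⟩,
      LinearMap.mem_ker.2 (by rw [map_smul]; exact hf ⟨_, rfl⟩ r hr), (Algebra.smul_def r x).symm⟩
  obtain ⟨m, hm⟩ := I.exists_pow_smul_top_inf_le_pow_smul (J.restrictScalars R) n
  refine ⟨m, fun x hx => ?_⟩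
  obtain ⟨y, hy, hyx⟩ := hsmul (hm ⟨hx, x.2⟩)
  rwa [← Subtype.ext hyx]

variable (A E)

theorem baer_powerTorsion [Module.Injective A E] : Module.Baer A (powerTorsion I A E) := by
  intro J g
  have := IsNoetherianRing.of_finite R A
  set f := (powerTorsion I A E).subtype ∘ₗ g
  have hf : LinearMap.range f ≤ powerTorsion I A E := by
    rintro _ ⟨x, rfl⟩
    exact (g x).2
  obtain ⟨n, hn⟩ := (Module.Finite.iff_fg.1 inferInstance : (LinearMap.range f).FG)
    |>.exists_le_torsionByIdeal_pow hf
  obtain ⟨m, hm⟩ := exists_comap_leftExtension_pow_le_ker I hn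
  obtain ⟨e, he_ann, he⟩ := Module.Injective.exists_smul_eq_of_comap_le_ker f hm
  have he_mem : e ∈ powerTorsion I A E :=
    mem_powerTorsion.2 ⟨m, fun r hr => he_ann (Ideal.algebraMap_mem_leftExtension hr)⟩
  exact ⟨LinearMap.toSpanSingleton A _ ⟨e, he_mem⟩, fun x hx => Subtype.ext (he ⟨x, hx⟩)⟩

end Noetherian

theorem exists_injective_torsion_embedding
    (R : Type u) [CommRing R] [IsNoetherianRing R] (I : Ideal R)
    (A : Type u) [Ring A] [Algebra R A] [Module.Finite R A]
    (M : Type u) [AddCommGroup M] [Module A M]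
    (hM : IsIPowerTorsion I A M) :
    ∃ Q : ModuleCat.{u} A, IsIPowerTorsion I A Q ∧ Injective Q ∧
      ∃ f : M →ₗ[A] Q, Function.Injective f := by
  let ι := Injective.ι (ModuleCat.of A M)
  let E := Injective.under (ModuleCat.of A M)
  have : Injective (ModuleCat.of A E) := inferInstanceAs (Injective E)
  have : Module.Injective A E := Module.injective_module_of_injective_object A E
  have : Module.Injective A (powerTorsion I A E) := (baer_powerTorsion I A E).injective
  refine ⟨ModuleCat.of A (powerTorsion I A E), isIPowerTorsion_powerTorsion I A E,
    Module.injective_object_of_injective_module A _,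
    ι.hom.codRestrict _ fun x => hM.range_le_powerTorsion ι.hom ⟨x, rfl⟩, fun x y hxy => ?_⟩
  exact (ModuleCat.mono_iff_injective ι).1 inferInstance (congrArg Subtype.val hxy)
end

section
/- Let k be a commutative ring and let A be an associative unital k-algebra which is left noetherian. Let Q be an injective left A-module and let F be a flat k-module. Then the tensor product Q ⊗_k F, equipped with the left A-action through the first factor (a · (q ⊗ f) := (a·q) ⊗ f), is an injective left A-module. -/
/-!
By Baer's criterion it suffices to extend `A`-linear maps `I → Q ⊗[k] F` from left ideals `I`
to `A`. The natural map `Hom_A(M, Q) ⊗[k] F → Hom_A(M, Q ⊗[k] F)` is an isomorphism for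
`M = Aⁿ`; applying the five lemma to `Hom_A(-, ·)` of a presentation `Aᵐ → Aⁿ → M → 0`, which
stays left exact after `⊗[k] F` because `F` is flat, it is an isomorphism for every finitely
presented `M`, in particular for every left ideal of the noetherian ring `A`. A map
`I → Q ⊗[k] F` thus comes from `Hom_A(I, Q) ⊗[k] F`, which is the image of
`Hom_A(A, Q) ⊗[k] F` because `Q` is injective and `- ⊗[k] F` is right exact.
-/

open TensorProduct

universe u

section

variable {A : Type*} [Ring A] (S : Type*) [Semiring S] (N : Type*) [AddCommGroup N] [Module A N]
  [Module S N] [SMulCommClass A S N] {M₁ M₂ M₃ : Type*} [AddCommGroup M₁] [AddCommGroup M₂]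
  [AddCommGroup M₃] [Module A M₁] [Module A M₂] [Module A M₃]

theorem Function.Exact.lcomp_of_surjective {f : M₁ →ₗ[A] M₂} {g : M₂ →ₗ[A] M₃}
    (exact : Function.Exact f g) (surj : Function.Surjective g) :
    Function.Exact (LinearMap.lcomp S N g) (LinearMap.lcomp S N f) := by
  intro h
  simp only [LinearMap.lcomp_apply', Set.mem_range]
  refine ⟨fun hh ↦ ?_, fun ⟨y, hy⟩ ↦ ?_⟩
  · use ((LinearMap.range f).liftQ h (LinearMap.range_le_ker_iff.mpr hh)).comp
      (exact.linearEquivOfSurjective surj).symm.toLinearMap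
    ext x
    simp
  · rw [← hy, LinearMap.comp_assoc, exact.linearMap_comp_eq_zero, LinearMap.comp_zero y]

end

section

variable (k : Type*) [CommRing k] (A : Type*) [Ring A] [Algebra k A]
  (Q : Type*) [AddCommGroup Q] [Module k Q] [Module A Q] [IsScalarTower k A Q]
  (F : Type*) [AddCommGroup F] [Module k F]
  (M : Type*) [AddCommGroup M] [Module A M]

noncomputable def homTensorMap : (M →ₗ[A] Q) ⊗[k] F →ₗ[k] (M →ₗ[A] Q ⊗[k] F) :=
  TensorProduct.lift <| LinearMap.mk₂ k (fun f x ↦ (AlgebraTensorModule.mk k A Q F).flip x ∘ₗ f)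
    (fun _ _ _ ↦ by ext; simp [add_tmul]) (fun _ _ _ ↦ by ext; simp [smul_tmul'])
    (fun _ _ _ ↦ by ext; simp) (fun _ _ _ ↦ by ext; simp)

variable {k A Q F M}

@[simp]
theorem homTensorMap_tmul_apply (f : M →ₗ[A] Q) (x : F) (m : M) :
    homTensorMap k A Q F M (f ⊗ₜ x) m = f m ⊗ₜ x := rfl

theorem lcomp_comp_homTensorMap {M' : Type*} [AddCommGroup M'] [Module A M'] (h : M' →ₗ[A] M) :
    LinearMap.lcomp k (Q ⊗[k] F) h ∘ₗ homTensorMap k A Q F M =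
      homTensorMap k A Q F M' ∘ₗ (LinearMap.lcomp k Q h).rTensor F := by
  ext f x m
  rfl

theorem homTensorMap_bijective_of_pi (ι : Type*) [Fintype ι] [DecidableEq ι] :
    Function.Bijective (homTensorMap k A Q F (ι → A)) := by
  have h : (LinearEquiv.piRing A (Q ⊗[k] F) ι k).toLinearMap ∘ₗ homTensorMap k A Q F (ι → A) =
      (TensorProduct.piLeft k F (fun _ : ι ↦ Q)).toLinearMap ∘ₗ
        (LinearEquiv.piRing A Q ι k).toLinearMap.rTensor F := by
    ext f x i
    simp
  have h' := congrArg DFunLike.coe h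
  simp only [LinearMap.coe_comp, LinearEquiv.coe_coe] at h'
  rw [← EquivLike.comp_bijective _ (LinearEquiv.piRing A (Q ⊗[k] F) ι k), h']
  exact (TensorProduct.piLeft k F _).bijective.comp
    (LinearEquiv.rTensor F (LinearEquiv.piRing A Q ι k)).bijective

theorem homTensorMap_bijective_of_finitePresentation [Module.Flat k F]
    [Module.FinitePresentation A M] : Function.Bijective (homTensorMap k A Q F M) := by
  obtain ⟨n, m, p, g, hp, hgp⟩ := Module.FinitePresentation.exists_fin' A M
  exact LinearMap.bijective_of_bijective_of_injective_of_left_exact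
    ((LinearMap.lcomp k Q p).rTensor F) ((LinearMap.lcomp k Q g).rTensor F)
    (LinearMap.lcomp k (Q ⊗[k] F) p) (LinearMap.lcomp k (Q ⊗[k] F) g)
    _ _ _ (lcomp_comp_homTensorMap p) (lcomp_comp_homTensorMap g)
    (Module.Flat.rTensor_exact F (hgp.lcomp_of_surjective k Q hp))
    (hgp.lcomp_of_surjective k (Q ⊗[k] F) hp)
    (homTensorMap_bijective_of_pi (Fin n)) (homTensorMap_bijective_of_pi (Fin m)).1
    (Module.Flat.rTensor_preserves_injective_linearMap _
      (LinearMap.lcomp_injective_of_surjective p hp))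
    (LinearMap.lcomp_injective_of_surjective p hp)

end

theorem injective_tensorProduct_flat_of_injective
    (k : Type u) [CommRing k] (A : Type u) [Ring A] [Algebra k A]
    [IsNoetherianRing A]
    (Q : Type u) [AddCommGroup Q] [Module k Q] [Module A Q] [IsScalarTower k A Q]
    (F : Type u) [AddCommGroup F] [Module k F] [Module.Flat k F]
    (hQ : Module.Injective A Q) :
    Module.Injective A (Q ⊗[k] F) := by
  refine Module.Baer.injective fun I g ↦ ?_
  have : Module.FinitePresentation A I := Module.finitePresentation_of_finite A I
  obtain ⟨v, rfl⟩ := (homTensorMap_bijective_of_finitePresentation (Q := Q) (F := F)).2 g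
  have restrict_surjective : Function.Surjective (LinearMap.lcomp k Q I.subtype) := fun f ↦
    have ⟨h, hh⟩ := hQ.out I.subtype I.injective_subtype f
    ⟨h, LinearMap.ext hh⟩
  obtain ⟨w, rfl⟩ := LinearMap.rTensor_surjective F restrict_surjective v
  exact ⟨homTensorMap k A Q F A w, fun x hx ↦
    LinearMap.congr_fun (LinearMap.congr_fun (lcomp_comp_homTensorMap I.subtype) w) ⟨x, hx⟩⟩
end

section
/- Let p be a prime number, let k be a commutative ring of characteristic p (i.e. p · 1 = 0 in k), and let σ be a finite set. Regard the polynomial algebra k[X_i : i ∈ σ] as an algebra over itself via the k-algebra endomorphism determined by X_i ↦ X_i^p − X_i for every i ∈ σ (the Artin–Schreier morphism). Then with this algebra structure k[X_i : i ∈ σ] is an étale algebra over k[X_i : i ∈ σ]: it is of finite presentation and formally étale. -/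
open MvPolynomial

/-- The Artin–Schreier endomorphism of the polynomial ring, determined by
`Xᵢ ↦ Xᵢ^p − Xᵢ` for every `i ∈ σ`. -/
noncomputable def artinSchreier (p : ℕ) (k : Type u) [CommRing k] (σ : Type) :
    MvPolynomial σ k →+* MvPolynomial σ k :=
  (aeval (fun i : σ => (X i : MvPolynomial σ k) ^ p - X i)).toRingHom

/-- The algebra structure of the polynomial ring over itself given by the
Artin–Schreier morphism. -/
noncomputable def artinSchreierAlgebra (p : ℕ) (k : Type u) [CommRing k] (σ : Type) :
    Algebra (MvPolynomial σ k) (MvPolynomial σ k) :=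
  (artinSchreier p k σ).toAlgebra

/-!
In characteristic `p`, if `d² = 0` then `(a + d)^p = a^p`, so on a coset `a + I` of a
square-zero ideal the Artin–Schreier map `b ↦ b^p - b` is `a + d ↦ (a^p - a) - d`: a bijection
onto the coset `(a^p - a) + I`. Since a homomorphism out of `k[Xᵢ]` over the Artin–Schreier
morphism is the choice of a root `bᵢ` of `T^p - T - yᵢ` for each `i`, such homomorphisms lift
uniquely along square-zero extensions. Finite presentation comes for free: the composite
`k → k[Xᵢ] → k[Xᵢ]` is the (finitely presented) structure map of `k[Xᵢ]`.
-/

section SquareZero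

variable {B : Type*} [CommRing B] {p : ℕ}

theorem add_pow_succ_of_mul_self_eq_zero (a : B) {d : B} (hd : d * d = 0) (n : ℕ) :
    (a + d) ^ (n + 1) = a ^ (n + 1) + (n + 1) * a ^ n * d := by
  induction n with
  | zero => ring
  | succ n ih =>
    rw [pow_succ (a + d), ih]
    push_cast
    linear_combination ((n : B) + 1) * a ^ n * hd

theorem add_pow_prime_of_mul_self_eq_zero (hp : p.Prime) (hpB : (p : B) = 0) (a : B) {d : B}
    (hd : d * d = 0) : (a + d) ^ p = a ^ p := by
  obtain ⟨n, rfl⟩ : ∃ n, p = n + 1 := Nat.exists_eq_add_one.mpr hp.pos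
  rw [add_pow_succ_of_mul_self_eq_zero a hd n]
  push_cast at hpB
  rw [hpB]
  ring

theorem mul_self_eq_zero_of_mem_of_sq_eq_bot {I : Ideal B} (hI : I ^ 2 = ⊥) {x : B}
    (hx : x ∈ I) : x * x = 0 := by
  have : x * x ∈ I ^ 2 := pow_two I ▸ Ideal.mul_mem_mul hx hx
  simpa [hI] using this

variable (hp : p.Prime) (hpB : (p : B) = 0) {I : Ideal B} (hI : I ^ 2 = ⊥)
include hp hpB hI

theorem eq_of_mk_eq_of_pow_sub_self_eq {a b : B}
    (hab : Ideal.Quotient.mk I a = Ideal.Quotient.mk I b) (h : a ^ p - a = b ^ p - b) : a = b := by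
  have hd := mul_self_eq_zero_of_mem_of_sq_eq_bot hI (Ideal.Quotient.eq.mp hab)
  rw [← add_sub_cancel b a, add_pow_prime_of_mul_self_eq_zero hp hpB b hd] at h
  linear_combination -h

theorem exists_mk_eq_and_pow_sub_self_eq {a y : B}
    (h : Ideal.Quotient.mk I (a ^ p - a) = Ideal.Quotient.mk I y) :
    ∃ b, Ideal.Quotient.mk I b = Ideal.Quotient.mk I a ∧ b ^ p - b = y := by
  have hd : a ^ p - a - y ∈ I := Ideal.Quotient.eq.mp h
  -- adding `d ∈ I` to `a` lowers `a^p - a` by `d`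
  refine ⟨a + (a ^ p - a - y), ?_, ?_⟩
  · rw [map_add, Ideal.Quotient.eq_zero_iff_mem.mpr hd, add_zero]
  · rw [add_pow_prime_of_mul_self_eq_zero hp hpB a (mul_self_eq_zero_of_mem_of_sq_eq_bot hI hd)]
    ring

end SquareZero

section ArtinSchreier

variable {p : ℕ} {k : Type*} [CommRing k] {σ : Type}

@[simp]
theorem artinSchreier_C (a : k) : artinSchreier p k σ (C a) = C a := by
  simp [artinSchreier, algebraMap_eq]

@[simp]
theorem artinSchreier_X (i : σ) : artinSchreier p k σ (X i) = X i ^ p - X i := by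
  simp [artinSchreier]

theorem artinSchreier_comp_C : (artinSchreier p k σ).comp C = C :=
  RingHom.ext artinSchreier_C

variable {B : Type*} [CommRing B]

theorem pow_sub_self_of_comp_artinSchreier {f : MvPolynomial σ k →+* B}
    {ψ : MvPolynomial σ k →+* B} (hf : f.comp (artinSchreier p k σ) = ψ) (i : σ) :
    f (X i) ^ p - f (X i) = ψ (X i) := by
  rw [← hf, RingHom.comp_apply, artinSchreier_X, map_sub, map_pow]

theorem eval₂Hom_comp_artinSchreier (ψ : MvPolynomial σ k →+* B) {b : σ → B}
    (hb : ∀ i, b i ^ p - b i = ψ (X i)) :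
    (eval₂Hom (ψ.comp C) b).comp (artinSchreier p k σ) = ψ := by
  ext <;> simp [hb]

theorem ringHom_ext_of_comp_artinSchreier {f g : MvPolynomial σ k →+* B}
    (h : f.comp (artinSchreier p k σ) = g.comp (artinSchreier p k σ))
    (hX : ∀ i, f (X i) = g (X i)) : f = g := by
  refine MvPolynomial.ringHom_ext (fun a ↦ ?_) hX
  simpa using RingHom.congr_fun h (C a)

theorem artinSchreier_finitePresentation [Finite σ] :
    (artinSchreier p k σ).FinitePresentation := by
  have hC : (C : k →+* MvPolynomial σ k).FinitePresentation := by
    rw [← algebraMap_eq]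
    exact RingHom.finitePresentation_algebraMap.mpr inferInstance
  exact .of_comp_finiteType C (by rwa [artinSchreier_comp_C])
    (RingHom.FiniteType.of_finitePresentation hC)

theorem artinSchreier_formallyEtale (hp : p.Prime) (hchar : (p : k) = 0) :
    (artinSchreier p k σ).FormallyEtale := by
  let := (artinSchreier p k σ).toAlgebra
  unfold RingHom.FormallyEtale
  rw [Algebra.FormallyEtale.iff_comp_bijective]
  intro B _ _ I hI
  have hpB : (p : B) = 0 := by
    rw [← map_natCast (algebraMap (MvPolynomial σ k) B), ← map_natCast C, hchar, map_zero,
      map_zero]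
  constructor
  · intro f g hfg
    refine AlgHom.coe_ringHom_injective <| ringHom_ext_of_comp_artinSchreier
      (f.comp_algebraMap.trans g.comp_algebraMap.symm) fun i ↦ ?_
    refine eq_of_mk_eq_of_pow_sub_self_eq hp hpB hI (AlgHom.congr_fun hfg (X i)) ?_
    rw [pow_sub_self_of_comp_artinSchreier f.comp_algebraMap,
      pow_sub_self_of_comp_artinSchreier g.comp_algebraMap]
  · intro f
    choose c hc using fun i ↦ Ideal.Quotient.mk_surjective (I := I) (f (X i))
    have hc' (i : σ) : Ideal.Quotient.mk I (c i ^ p - c i) =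
        Ideal.Quotient.mk I (algebraMap (MvPolynomial σ k) B (X i)) := by
      rw [map_sub, map_pow, hc, Ideal.Quotient.mk_algebraMap]
      exact pow_sub_self_of_comp_artinSchreier f.comp_algebraMap i
    choose b hbc hb using fun i ↦ exists_mk_eq_and_pow_sub_self_eq hp hpB hI (hc' i)
    let g : MvPolynomial σ k →ₐ[MvPolynomial σ k] B :=
      { eval₂Hom ((algebraMap (MvPolynomial σ k) B).comp C) b with
        commutes' := RingHom.congr_fun (eval₂Hom_comp_artinSchreier _ hb) }
    refine ⟨g, AlgHom.coe_ringHom_injective <| ringHom_ext_of_comp_artinSchreier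
      (((Ideal.Quotient.mkₐ _ I).comp g).comp_algebraMap.trans f.comp_algebraMap.symm)
      fun i ↦ ?_⟩
    simp [g, hbc, hc]

end ArtinSchreier

theorem artinSchreier_etale (p : ℕ) (hp : p.Prime) (k : Type u) [CommRing k]
    (hchar : (p : k) = 0) (σ : Type) [Finite σ] :
    @Algebra.Etale (MvPolynomial σ k) (MvPolynomial σ k) _ _
      (artinSchreierAlgebra p k σ) :=
  @Algebra.Etale.mk _ _ _ _ (artinSchreierAlgebra p k σ)
    (artinSchreier_formallyEtale hp hchar) artinSchreier_finitePresentation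
end

section
/- Let D and D′ be triangulated categories, each equipped with a t-structure, with subcategories denoted D^{≤n}, D^{≥n} and D′^{≤n}, D′^{≥n}. Let L : D → D′ and R : D′ → D be triangulated functors with L left adjoint to R. Assume: (i) the unit of adjunction id_D → R ∘ L is an isomorphism; (ii) L is right t-exact, i.e. L sends D^{≤0} into D′^{≤0}; (iii) there exists c ≥ 0 such that R sends D′^{≤n} into D^{≤n+c} for all integers n; (iv) for every bounded object X of D′ (i.e. X ∈ D′^{≤n} ∩ D′^{≥m} for some m ≤ n) the counit L(R(X)) → X is an isomorphism; (v) every object of D′ lies in D′^{≤n} for some integer n; (vi) any object of D′ lying in D′^{≤n} for all integers n is zero. Then R sends no nonzero object of D′ to zero, and L and R are quasi-inverse equivalences of categories. -/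
/-!
Since the unit is an isomorphism, `L` is fully faithful and `R ε` is invertible, so `ε` is
invertible as soon as `R` reflects zero objects (apply `R` to a cone of `ε`). Suppose `R Z = 0`
with `Z ∈ D′^{≤n}`, and truncate `X → Z → Y → X[1]` with `X ∈ D′^{≤n-c-1}`, `Y ∈ D′^{≥n-c}`.
Then `Y ∈ D′^{≤n}` is bounded, so `Y ≅ L R Y ≅ L ((R X)[1]) ∈ D′^{≤n-2}`, whence `Z ∈ D′^{≤n-1}`.
Since `Z` is bounded above, descending induction puts `Z` in every `D′^{≤n}`, so `Z = 0`.
-/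

open CategoryTheory Category Limits Pretriangulated Triangulated

namespace CategoryTheory

variable {C D : Type*} [Category C] [HasZeroObject C] [Preadditive C] [HasShift C ℤ]
  [∀ n : ℤ, (shiftFunctor C n).Additive] [Pretriangulated C]
  [Category D] [HasZeroObject D] [Preadditive D] [HasShift D ℤ]
  [∀ n : ℤ, (shiftFunctor D n).Additive] [Pretriangulated D]

lemma Triangulated.TStructure.le_of_forall_le_imp_le_sub_one (t : TStructure C) {X : C}
    {n₀ : ℤ} (h₀ : t.le n₀ X) (hstep : ∀ n, t.le n X → t.le (n - 1) X) (n : ℤ) :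
    t.le n X := by
  rcases le_total n₀ n with h | h
  · exact t.le_monotone h _ h₀
  · exact Int.leInductionDown (motive := fun n _ => t.le n X) h₀ (fun n _ => hstep n) n h

lemma Functor.le_obj_of_le_zero_imp_le_zero (F : C ⥤ D) [F.CommShift ℤ]
    {t₁ : TStructure C} {t₂ : TStructure D}
    (hF : ∀ X, t₁.le 0 X → t₂.le 0 (F.obj X)) (n : ℤ) {X : C} (hX : t₁.le n X) :
    t₂.le n (F.obj X) := by
  have h : t₂.le 0 ((F.obj X)⟦n⟧) :=
    ((t₂.le 0).prop_iff_of_iso ((F.commShiftIso n).app X)).1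
      (hF _ (t₁.le_shift n n 0 (add_zero n) X hX))
  rw [← t₂.shift_le n 0 n (add_zero n)]
  exact h

lemma Functor.isIso_of_isIso_map_of_reflects_isZero (F : C ⥤ D) [F.CommShift ℤ]
    [F.IsTriangulated] (hF : ∀ Z, IsZero (F.obj Z) → IsZero Z) {X Y : C} (f : X ⟶ Y)
    [IsIso (F.map f)] : IsIso f := by
  obtain ⟨Z, g, h, mem⟩ := distinguished_cocone_triangle f
  exact (Triangle.isZero₃_iff_isIso₁ _ mem).1
    (hF Z (Triangle.isZero₃_of_isIso₁ _ (F.map_distinguished _ mem)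
      (inferInstanceAs (IsIso (F.map f)))))

lemma Adjunction.isIso_counit_of_reflects_isZero {L : C ⥤ D} {R : D ⥤ C} (adj : L ⊣ R)
    [R.CommShift ℤ] [R.IsTriangulated] [IsIso adj.unit]
    (hR : ∀ Y, IsZero (R.obj Y) → IsZero Y) : IsIso adj.counit := by
  suffices ∀ Y, IsIso (adj.counit.app Y) from NatIso.isIso_of_isIso_app _
  intro Y
  have : IsIso (adj.unit.app (R.obj Y) ≫ R.map (adj.counit.app Y)) := by
    rw [adj.right_triangle_components]
    exact IsIso.id _
  have : IsIso (R.map (adj.counit.app Y)) := IsIso.of_isIso_comp_left (adj.unit.app (R.obj Y)) _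
  exact R.isIso_of_isIso_map_of_reflects_isZero hR _

lemma Adjunction.le_sub_one_of_isZero_right_obj {L : C ⥤ D} {R : D ⥤ C} (adj : L ⊣ R)
    [R.CommShift ℤ] [R.IsTriangulated] {t₁ : TStructure C} {t₂ : TStructure D}
    (hL : ∀ n X, t₁.le n X → t₂.le n (L.obj X)) {c : ℤ} (hc : 0 ≤ c)
    (hR : ∀ n Y, t₂.le n Y → t₁.le (n + c) (R.obj Y))
    (hε : ∀ Y, t₂.bounded Y → IsIso (adj.counit.app Y))
    {Z : D} (hZ : IsZero (R.obj Z)) {n : ℤ} (hn : t₂.le n Z) : t₂.le (n - 1) Z := by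
  obtain ⟨X, Y, hX, hY, f, g, h, mem⟩ := t₂.exists_triangle Z (n - c - 1) (n - c) (by omega)
  have hX₁ : t₂.le n (X⟦(1 : ℤ)⟧) :=
    t₂.le_monotone (by omega) _ (t₂.le_shift _ 1 (n - c - 2) (by omega) X hX)
  have hYn : t₂.le n Y := (t₂.isLE₂ _ (rot_of_distTriang _ mem) n ⟨hn⟩ ⟨hX₁⟩).le
  have : IsIso (adj.counit.app Y) := hε Y ⟨⟨n - c, ⟨hY⟩⟩, ⟨n, ⟨hYn⟩⟩⟩
  have : IsIso (R.mapTriangle.obj (Triangle.mk f g h)).mor₃ :=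
    (Triangle.isZero₂_iff_isIso₃ _ (R.map_distinguished _ mem)).1 hZ
  have hRX : t₁.le (n - 1) (R.obj X) := t₁.le_monotone (by omega) _ (hR _ X hX)
  have hRY : t₁.le (n - 2) (R.obj Y) :=
    ((t₁.le _).prop_iff_of_iso (asIso (R.mapTriangle.obj (Triangle.mk f g h)).mor₃)).2
      (t₁.le_shift _ 1 _ (by omega) _ hRX)
  have hY' : t₂.le (n - 2) Y :=
    ((t₂.le _).prop_iff_of_iso (asIso (adj.counit.app Y))).1 (hL _ _ hRY)
  exact (t₂.isLE₂ _ mem (n - 1) ⟨t₂.le_monotone (by omega) _ hX⟩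
    ⟨t₂.le_monotone (by omega) _ hY'⟩).le

end CategoryTheory

theorem adjunction_isEquivalence_of_tStructures
    {C : Type u₁} [Category.{v₁} C] [HasZeroObject C] [Preadditive C] [HasShift C ℤ]
    [∀ n : ℤ, (shiftFunctor C n).Additive] [Pretriangulated C] [IsTriangulated C]
    {D : Type u₂} [Category.{v₂} D] [HasZeroObject D] [Preadditive D] [HasShift D ℤ]
    [∀ n : ℤ, (shiftFunctor D n).Additive] [Pretriangulated D] [IsTriangulated D]
    (tC : TStructure C) (tD : TStructure D)
    (L : C ⥤ D) (R : D ⥤ C) [L.CommShift ℤ] [L.IsTriangulated]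
    [R.CommShift ℤ] [R.IsTriangulated]
    (adj : L ⊣ R)
    (hunit : IsIso adj.unit)
    (hL_right_exact : ∀ X : C, tC.le 0 X → tD.le 0 (L.obj X))
    (hR_bounded_amplitude : ∃ c : ℤ, 0 ≤ c ∧ ∀ (n : ℤ) (Y : D), tD.le n Y →
      tC.le (n + c) (R.obj Y))
    (hcounit_bounded : ∀ Y : D, (∃ m n : ℤ, m ≤ n ∧ tD.ge m Y ∧ tD.le n Y) →
      IsIso (adj.counit.app Y))
    (hbounded_above : ∀ Y : D, ∃ n : ℤ, tD.le n Y)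
    (hnondegenerate : ∀ Y : D, (∀ n : ℤ, tD.le n Y) → IsZero Y) :
    (∀ Y : D, IsZero (R.obj Y) → IsZero Y) ∧ IsIso adj.unit ∧ IsIso adj.counit := by
  obtain ⟨c, hc, hR⟩ := hR_bounded_amplitude
  have hL : ∀ n X, tC.le n X → tD.le n (L.obj X) := fun n _ =>
    L.le_obj_of_le_zero_imp_le_zero hL_right_exact n
  have hε : ∀ Y, tD.bounded Y → IsIso (adj.counit.app Y) := by
    rintro Y ⟨⟨m, hm⟩, ⟨n, hn⟩⟩
    exact hcounit_bounded Y
      ⟨min m n, n, min_le_right m n, tD.ge_antitone (min_le_left m n) _ hm.ge, hn.le⟩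
  have hR_reflects : ∀ Y, IsZero (R.obj Y) → IsZero Y := fun Y hY =>
    have ⟨_, hY₀⟩ := hbounded_above Y
    hnondegenerate Y <| tD.le_of_forall_le_imp_le_sub_one hY₀ fun _ =>
      adj.le_sub_one_of_isZero_right_obj hL hc hR hε hY
  have := hunit
  exact ⟨hR_reflects, hunit, adj.isIso_counit_of_reflects_isZero hR_reflects⟩
end
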